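/- arXiv:math/0405276 — 4 statements merged into one kernel-verified Lean document; each statement's English description precedes it below -/
import Mathlib

section
/- Let G₁, G₂, G₃ be real Hilbert spaces. If A ∈ S(G₁,G₂) and B ∈ S(G₂,G₃), then the composition BA belongs to S(G₁,G₃). -/
open ContinuousLinearMap
open scoped InnerProductSpace

noncomputable section

universe u v w

/-- A bounded operator `T` between real inner product spaces is *Hilbert–Schmidt* if
`∑ᵢ ‖T eᵢ‖²` is finite for some orthonormal (Hilbert) basis `(eᵢ)`. -/
def IsHilbertSchmidt {E : Type u} {F : Type v} [NormedAddCommGroup E] [InnerProductSpace ℝ E]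
    [NormedAddCommGroup F] [InnerProductSpace ℝ F] (T : E →L[ℝ] F) : Prop :=
  ∃ (ι : Type u) (b : HilbertBasis ι ℝ E), Summable fun i => ‖T (b i)‖ ^ 2

/-- A bounded operator is invertible with a bounded inverse. -/
def IsBoundedlyInvertible {E : Type u} {F : Type v} [NormedAddCommGroup E]
    [InnerProductSpace ℝ E] [NormedAddCommGroup F] [InnerProductSpace ℝ F]
    (T : E →L[ℝ] F) : Prop :=
  ∃ S : F →L[ℝ] E, S.comp T = ContinuousLinearMap.id ℝ E ∧
    T.comp S = ContinuousLinearMap.id ℝ F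

/-- `A ∈ S(G₁,G₂)`: `A` is invertible with bounded inverse and `1 - (A*A)^{1/2}` is
Hilbert–Schmidt (`(A*A)^{1/2}` being the positive square root of `A*A`). -/
def MemS {G₁ : Type u} {G₂ : Type v}
    [NormedAddCommGroup G₁] [InnerProductSpace ℝ G₁] [CompleteSpace G₁]
    [NormedAddCommGroup G₂] [InnerProductSpace ℝ G₂] [CompleteSpace G₂]
    (A : G₁ →L[ℝ] G₂) : Prop :=
  IsBoundedlyInvertible A ∧
    ∃ S : G₁ →L[ℝ] G₁, S.IsPositive ∧
      S.comp S = (ContinuousLinearMap.adjoint A).comp A ∧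
      IsHilbertSchmidt (ContinuousLinearMap.id ℝ G₁ - S)

/-- `A ∈ S(G)`: `A` is a positive, invertible operator on `G` such that `1 - A` is
Hilbert–Schmidt. -/
def MemSG {G : Type u} [NormedAddCommGroup G] [InnerProductSpace ℝ G] [CompleteSpace G]
    (A : G →L[ℝ] G) : Prop :=
  A.IsPositive ∧ IsBoundedlyInvertible A ∧
    IsHilbertSchmidt (ContinuousLinearMap.id ℝ G - A)

/-- A family of subspaces of a real Hilbert space is mutually quasi-orthogonal if some
`A ∈ S(G)` maps them to mutually orthogonal subspaces. -/
def MutuallyQuasiOrthogonal {G : Type u} [NormedAddCommGroup G] [InnerProductSpace ℝ G]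
    [CompleteSpace G] {ι : Type w} (V : ι → Submodule ℝ G) : Prop :=
  ∃ A : G →L[ℝ] G, MemSG A ∧
    ∀ i j, i ≠ j → ∀ x ∈ V i, ∀ y ∈ V j, ⟪A x, A y⟫_ℝ = 0

/-!
A positive operator `S` with `1 - S²` Hilbert–Schmidt has `1 - S` Hilbert–Schmidt as well, since
`1 - S² = (1 + S)(1 - S)` and `1 + S` is invertible. Positive square roots always exist (on a real
Hilbert space we build them from the power series of `√(1 - x)`), so `A ∈ S(G₁, G₂)` just means
that `A` is boundedly invertible and `1 - A*A` is Hilbert–Schmidt. The theorem then follows from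
`1 - (BA)*(BA) = (1 - A*A) + A*(1 - B*B)A`, Hilbert–Schmidt operators being a two-sided ideal.
-/

section SqrtSeries

open Finset

/-- `1 - √(1 - x) = ∑ₙ sqrtCoeff n • xⁿ`. -/
def sqrtCoeff : ℕ → ℝ
  | 0 => 0
  | n + 1 => 2 * catalan n / 4 ^ (n + 1)

lemma sqrtCoeff_nonneg (n : ℕ) : 0 ≤ sqrtCoeff n := by
  cases n <;> simp only [sqrtCoeff] <;> positivity

lemma sqrtCoeff_succ_eq_sub (n : ℕ) :
    sqrtCoeff (n + 1) = n.centralBinom / 4 ^ n - (n + 1).centralBinom / 4 ^ (n + 1) := by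
  have hcat : ((n : ℝ) + 1) * catalan n = n.centralBinom := by
    exact_mod_cast succ_mul_catalan_eq_centralBinom n
  have hbinom : ((n : ℝ) + 1) * (n + 1).centralBinom = 2 * (2 * n + 1) * n.centralBinom := by
    exact_mod_cast Nat.succ_mul_centralBinom_succ n
  have hsucc : ((n + 1).centralBinom : ℝ) = 4 * n.centralBinom - 2 * catalan n := by
    refine mul_left_cancel₀ n.cast_add_one_ne_zero ?_
    linear_combination hbinom + 2 * hcat
  rw [sqrtCoeff, hsucc, pow_succ]
  field_simp
  ring

lemma sum_range_sqrtCoeff_le_one (N : ℕ) : ∑ n ∈ range N, sqrtCoeff n ≤ 1 := by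
  cases N with
  | zero => simp
  | succ N =>
    rw [sum_range_succ', sum_congr rfl fun n _ => sqrtCoeff_succ_eq_sub n,
      sum_range_sub' (fun n => (n.centralBinom : ℝ) / 4 ^ n)]
    simp only [Nat.centralBinom_zero, sqrtCoeff]
    norm_num
    positivity

lemma summable_sqrtCoeff : Summable sqrtCoeff :=
  summable_of_sum_range_le sqrtCoeff_nonneg sum_range_sqrtCoeff_le_one

lemma tsum_sqrtCoeff_le_one : ∑' n, sqrtCoeff n ≤ 1 :=
  summable_sqrtCoeff.tsum_le_of_sum_range_le sum_range_sqrtCoeff_le_one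

/-- The coefficientwise form of `(1 - f)² = 1 - x` for `f = ∑ₙ sqrtCoeff n • xⁿ`; for `n ≥ 2` it
is the Catalan recurrence. -/
lemma sum_antidiagonal_sqrtCoeff_mul (n : ℕ) :
    ∑ ij ∈ antidiagonal n, sqrtCoeff ij.1 * sqrtCoeff ij.2 =
      2 * sqrtCoeff n - if n = 1 then 1 else 0 := by
  match n with
  | 0 => simp [sqrtCoeff]
  | 1 => norm_num [Nat.sum_antidiagonal_succ, sqrtCoeff]
  | m + 2 =>
    rw [Nat.sum_antidiagonal_succ, Nat.sum_antidiagonal_succ']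
    simp only [sqrtCoeff, zero_mul, mul_zero, zero_add, if_neg (by omega : m + 2 ≠ 1), sub_zero]
    have hpow : ∀ ij ∈ antidiagonal m, (4 : ℝ) ^ (ij.1 + 1) * 4 ^ (ij.2 + 1) = 4 ^ (m + 2) := by
      intro ij hij
      rw [← pow_add, ← HasAntidiagonal.mem_antidiagonal.1 hij]
      ring_nf
    rw [sum_congr rfl fun ij hij => by rw [div_mul_div_comm, hpow ij hij], ← sum_div,
      catalan_succ' m]
    push_cast
    rw [sum_congr rfl fun ij _ => mul_mul_mul_comm (2 : ℝ) _ 2 _, ← mul_sum]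
    ring

variable {𝔸 : Type*} [NormedRing 𝔸] [NormedAlgebra ℝ 𝔸] {x : 𝔸}

def sqrtOneSub (x : 𝔸) : 𝔸 := 1 - ∑' n, sqrtCoeff n • x ^ n

lemma norm_sqrtCoeff_smul_pow_le (hx : ‖x‖ ≤ 1) (n : ℕ) :
    ‖sqrtCoeff n • x ^ n‖ ≤ sqrtCoeff n := by
  cases n with
  | zero => simp [sqrtCoeff]
  | succ n =>
    rw [norm_smul, Real.norm_of_nonneg (sqrtCoeff_nonneg _)]
    exact mul_le_of_le_one_right (sqrtCoeff_nonneg _)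
      ((norm_pow_le' x n.succ_pos).trans (pow_le_one₀ (norm_nonneg x) hx))

lemma summable_norm_sqrtCoeff_smul_pow (hx : ‖x‖ ≤ 1) :
    Summable fun n => ‖sqrtCoeff n • x ^ n‖ :=
  .of_nonneg_of_le (fun _ => norm_nonneg _) (norm_sqrtCoeff_smul_pow_le hx) summable_sqrtCoeff

lemma norm_one_sub_sqrtOneSub_le_one (hx : ‖x‖ ≤ 1) : ‖1 - sqrtOneSub x‖ ≤ 1 := by
  rw [sqrtOneSub, sub_sub_cancel]
  exact (tsum_of_norm_bounded summable_sqrtCoeff.hasSum (norm_sqrtCoeff_smul_pow_le hx)).trans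
    tsum_sqrtCoeff_le_one

lemma sqrtOneSub_sq [CompleteSpace 𝔸] (hx : ‖x‖ ≤ 1) : sqrtOneSub x ^ 2 = 1 - x := by
  set f := ∑' n, sqrtCoeff n • x ^ n
  have hs := summable_norm_sqrtCoeff_smul_pow hx
  have hterm (n : ℕ) :
      ∑ kl ∈ antidiagonal n, (sqrtCoeff kl.1 • x ^ kl.1) * (sqrtCoeff kl.2 • x ^ kl.2) =
        (2 : ℝ) • (sqrtCoeff n • x ^ n) - if n = 1 then x else 0 := by
    rw [sum_congr rfl fun kl hkl => by
      rw [smul_mul_smul_comm, ← pow_add, HasAntidiagonal.mem_antidiagonal.1 hkl], ← sum_smul,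
      sum_antidiagonal_sqrtCoeff_mul]
    split_ifs with h <;> simp [h, sub_smul, smul_smul]
  have hf : f * f = (2 : ℝ) • f - x := by
    rw [tsum_mul_tsum_eq_tsum_sum_antidiagonal_of_summable_norm hs hs, tsum_congr hterm,
      Summable.tsum_sub (hs.of_norm.const_smul _)
        (summable_of_ne_finset_zero (s := {1}) (by simp_all)),
      Summable.tsum_const_smul _ hs.of_norm, tsum_ite_eq]
  rw [sqrtOneSub, sq, sub_mul, mul_sub, mul_sub, hf, two_smul]
  simp only [one_mul, mul_one]
  abel

lemma IsSelfAdjoint.sqrtOneSub [StarRing 𝔸] [StarModule ℝ 𝔸] [ContinuousStar 𝔸]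
    (hx : IsSelfAdjoint x) : IsSelfAdjoint (sqrtOneSub x) := by
  refine .sub (.one _) ?_
  rw [IsSelfAdjoint, tsum_star]
  exact tsum_congr fun n => ((IsSelfAdjoint.all (sqrtCoeff n)).smul (hx.pow n)).star_eq

end SqrtSeries

namespace ContinuousLinearMap

variable {E : Type*} [NormedAddCommGroup E] [InnerProductSpace ℝ E]

lemma real_inner_apply_self_le (T : E →L[ℝ] E) (x : E) : ⟪T x, x⟫_ℝ ≤ ‖T‖ * ‖x‖ ^ 2 :=
  (real_inner_le_norm _ _).trans (by rw [sq, ← mul_assoc]; gcongr; exact T.le_opNorm x)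

variable [CompleteSpace E]

lemma isPositive_of_norm_one_sub_le_one {T : E →L[ℝ] E} (hT : IsSelfAdjoint T)
    (h : ‖1 - T‖ ≤ 1) : T.IsPositive := by
  refine (isPositive_iff' _).2 ⟨hT, fun x => ?_⟩
  have := ((1 - T).real_inner_apply_self_le x).trans (mul_le_of_le_one_left (sq_nonneg _) h)
  rwa [sub_apply, one_apply_eq_self, inner_sub_left, real_inner_self_eq_norm_sq,
    sub_le_self_iff] at this

lemma IsPositive.norm_one_sub_le_one {P : E →L[ℝ] E} (hP : P.IsPositive) (h : ‖P‖ ≤ 1) :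
    ‖1 - P‖ ≤ 1 := by
  rw [norm_eq_iSup_rayleighQuotient _ ((IsSelfAdjoint.one _).sub hP.isSelfAdjoint).isSymmetric]
  refine ciSup_le fun x => ?_
  rw [rayleighQuotient, reApplyInnerSelf_apply, RCLike.re_to_real, sub_apply,
    one_apply_eq_self, inner_sub_left, real_inner_self_eq_norm_sq, abs_div, abs_sq]
  have hle := (P.real_inner_apply_self_le x).trans (mul_le_of_le_one_left (sq_nonneg _) h)
  refine div_le_one_of_le₀ (abs_le.2 ⟨?_, ?_⟩) (sq_nonneg _)
  · linarith [sq_nonneg ‖x‖]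
  · linarith [hP.inner_nonneg_left x]

theorem IsPositive.exists_isPositive_mul_self_eq {P : E →L[ℝ] E} (hP : P.IsPositive) :
    ∃ S : E →L[ℝ] E, S.IsPositive ∧ S * S = P := by
  set c := ‖P‖ + 1
  have hc : 0 < c := by positivity
  set X := 1 - c⁻¹ • P
  have hX : ‖X‖ ≤ 1 := by
    refine (hP.smul_of_nonneg (by positivity)).norm_one_sub_le_one ?_
    rw [norm_smul, Real.norm_of_nonneg (by positivity), inv_mul_le_one₀ hc]
    linarith
  have hXsa : IsSelfAdjoint X :=
    (IsSelfAdjoint.one _).sub ((IsSelfAdjoint.all c⁻¹).smul hP.isSelfAdjoint)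
  refine ⟨√c • sqrtOneSub X, ?_, ?_⟩
  · exact (isPositive_of_norm_one_sub_le_one hXsa.sqrtOneSub
      (norm_one_sub_sqrtOneSub_le_one hX)).smul_of_nonneg (Real.sqrt_nonneg c)
  · rw [smul_mul_smul_comm, ← sq (sqrtOneSub X), sqrtOneSub_sq hX, sub_sub_cancel, smul_smul,
      Real.mul_self_sqrt hc.le, mul_inv_cancel₀ hc.ne', one_smul]

lemma IsPositive.isUnit_one_add {S : E →L[ℝ] E} (hS : S.IsPositive) : IsUnit (1 + S) := by
  refine isUnit_of_forall_le_norm_inner_map _ one_pos fun x => ?_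
  rw [add_apply, one_apply_eq_self, inner_add_left, real_inner_self_eq_norm_sq, NNReal.coe_one,
    mul_one, Real.norm_of_nonneg (by positivity [hS.inner_nonneg_left x])]
  linarith [hS.inner_nonneg_left x]

end ContinuousLinearMap

lemma summable_norm_sq_iff_tsum_enorm_sq_ne_top {ι F : Type*} [SeminormedAddCommGroup F]
    (f : ι → F) : Summable (fun i => ‖f i‖ ^ 2) ↔ ∑' i, ‖f i‖ₑ ^ 2 ≠ ⊤ := by
  have h := (NNReal.summable_coe (f := fun i => ‖f i‖₊ ^ 2)).trans
    ENNReal.tsum_coe_ne_top_iff_summable.symm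
  push_cast at h
  exact h

section HilbertSchmidt

variable {E : Type u} {F : Type v} [NormedAddCommGroup E] [InnerProductSpace ℝ E]
  [NormedAddCommGroup F] [InnerProductSpace ℝ F]

lemma HilbertBasis.tsum_enorm_inner_sq {ι : Type*} (b : HilbertBasis ι ℝ E) (y : E) :
    ∑' i, ‖⟪b i, y⟫_ℝ‖ₑ ^ 2 = ‖y‖ₑ ^ 2 := by
  have enorm_sq (r : ℝ) : ‖r‖ₑ ^ 2 = ENNReal.ofReal (r ^ 2) := by
    rw [Real.enorm_eq_ofReal_abs, ← ENNReal.ofReal_pow (abs_nonneg r), sq_abs]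
  have parseval : HasSum (fun i => ⟪b i, y⟫_ℝ ^ 2) (‖y‖ ^ 2) := by
    simpa only [real_inner_comm y, ← sq, real_inner_self_eq_norm_sq] using
      b.hasSum_inner_mul_inner y y
  simp_rw [enorm_sq, ← enorm_norm y, enorm_sq ‖y‖, ← parseval.tsum_eq]
  exact (ENNReal.ofReal_tsum_of_nonneg (fun _ => sq_nonneg _) parseval.summable).symm

lemma IsHilbertSchmidt.comp_left {G : Type*} [NormedAddCommGroup G] [InnerProductSpace ℝ G]
    {T : E →L[ℝ] F} (hT : IsHilbertSchmidt T) (U : F →L[ℝ] G) : IsHilbertSchmidt (U ∘L T) := by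
  obtain ⟨ι, b, hb⟩ := hT
  refine ⟨ι, b, .of_nonneg_of_le (fun _ => sq_nonneg _) (fun i => ?_) (hb.mul_left (‖U‖ ^ 2))⟩
  rw [comp_apply, ← mul_pow]
  gcongr
  exact U.le_opNorm _

variable [CompleteSpace E] [CompleteSpace F]

lemma tsum_enorm_apply_sq_eq_adjoint {ι κ : Type*} (T : E →L[ℝ] F) (b : HilbertBasis ι ℝ E)
    (c : HilbertBasis κ ℝ F) :
    ∑' i, ‖T (b i)‖ₑ ^ 2 = ∑' j, ‖adjoint T (c j)‖ₑ ^ 2 := by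
  calc ∑' i, ‖T (b i)‖ₑ ^ 2 = ∑' i, ∑' j, ‖⟪c j, T (b i)⟫_ℝ‖ₑ ^ 2 := by
        simp_rw [c.tsum_enorm_inner_sq]
    _ = ∑' j, ∑' i, ‖⟪b i, adjoint T (c j)⟫_ℝ‖ₑ ^ 2 := by
        simp_rw [adjoint_inner_right, real_inner_comm (c _)]
        exact ENNReal.tsum_comm
    _ = ∑' j, ‖adjoint T (c j)‖ₑ ^ 2 := by simp_rw [b.tsum_enorm_inner_sq]

lemma isHilbertSchmidt_iff_summable {ι : Type u} (T : E →L[ℝ] F) (b : HilbertBasis ι ℝ E) :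
    IsHilbertSchmidt T ↔ Summable fun i => ‖T (b i)‖ ^ 2 := by
  refine ⟨fun ⟨ι', b', hb'⟩ => ?_, fun h => ⟨ι, b, h⟩⟩
  obtain ⟨_, c, -⟩ := exists_hilbertBasis ℝ F
  rw [summable_norm_sq_iff_tsum_enorm_sq_ne_top] at hb' ⊢
  rwa [tsum_enorm_apply_sq_eq_adjoint T b c, ← tsum_enorm_apply_sq_eq_adjoint T b' c]

lemma IsHilbertSchmidt.adjoint {T : E →L[ℝ] F} (hT : IsHilbertSchmidt T) :
    IsHilbertSchmidt (adjoint T) := by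
  obtain ⟨ι, b, hb⟩ := hT
  obtain ⟨_, c, -⟩ := exists_hilbertBasis ℝ F
  refine ⟨_, c, ?_⟩
  rw [summable_norm_sq_iff_tsum_enorm_sq_ne_top] at hb ⊢
  rwa [← tsum_enorm_apply_sq_eq_adjoint T b c]

lemma IsHilbertSchmidt.add {T₁ T₂ : E →L[ℝ] F} (h₁ : IsHilbertSchmidt T₁)
    (h₂ : IsHilbertSchmidt T₂) : IsHilbertSchmidt (T₁ + T₂) := by
  obtain ⟨_, b, -⟩ := exists_hilbertBasis ℝ E
  rw [isHilbertSchmidt_iff_summable _ b] at h₁ h₂ ⊢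
  refine .of_nonneg_of_le (fun _ => sq_nonneg _) (fun i => ?_) ((h₁.add h₂).mul_left 2)
  calc ‖(T₁ + T₂) (b i)‖ ^ 2 ≤ (‖T₁ (b i)‖ + ‖T₂ (b i)‖) ^ 2 := by
        gcongr; exact norm_add_le _ _
    _ ≤ 2 * (‖T₁ (b i)‖ ^ 2 + ‖T₂ (b i)‖ ^ 2) := add_sq_le

lemma IsHilbertSchmidt.comp_right {G : Type*} [NormedAddCommGroup G] [InnerProductSpace ℝ G]
    [CompleteSpace G] {T : E →L[ℝ] F} (hT : IsHilbertSchmidt T) (V : G →L[ℝ] E) :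
    IsHilbertSchmidt (T ∘L V) := by
  simpa only [adjoint_comp, adjoint_adjoint] using
    (hT.adjoint.comp_left (ContinuousLinearMap.adjoint V)).adjoint

end HilbertSchmidt

lemma isHilbertSchmidt_one_sub_mul_self_iff {E : Type*} [NormedAddCommGroup E]
    [InnerProductSpace ℝ E] [CompleteSpace E] {S : E →L[ℝ] E} (hS : S.IsPositive) :
    IsHilbertSchmidt (1 - S * S) ↔ IsHilbertSchmidt (1 - S) := by
  have hfactor : 1 - S * S = (1 + S) * (1 - S) := by noncomm_ring
  obtain ⟨u, hu⟩ := hS.isUnit_one_add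
  refine ⟨fun h => ?_, fun h => hfactor ▸ h.comp_left _⟩
  have : 1 - S = ↑u⁻¹ * (1 - S * S) := by rw [hfactor, ← hu, ← mul_assoc, u.inv_mul, one_mul]
  exact this ▸ h.comp_left _

lemma IsBoundedlyInvertible.comp {E : Type u} {F : Type v} {G : Type w} [NormedAddCommGroup E]
    [InnerProductSpace ℝ E] [NormedAddCommGroup F] [InnerProductSpace ℝ F] [NormedAddCommGroup G]
    [InnerProductSpace ℝ G] {A : E →L[ℝ] F} {B : F →L[ℝ] G} (hA : IsBoundedlyInvertible A)
    (hB : IsBoundedlyInvertible B) : IsBoundedlyInvertible (B ∘L A) := by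
  obtain ⟨A', hA'A, hAA'⟩ := hA
  obtain ⟨B', hB'B, hBB'⟩ := hB
  refine ⟨A' ∘L B', ?_, ?_⟩
  · rw [comp_assoc, ← comp_assoc B', hB'B, id_comp, hA'A]
  · rw [comp_assoc, ← comp_assoc A, hAA', id_comp, hBB']

lemma memS_iff {G₁ : Type u} {G₂ : Type v}
    [NormedAddCommGroup G₁] [InnerProductSpace ℝ G₁] [CompleteSpace G₁]
    [NormedAddCommGroup G₂] [InnerProductSpace ℝ G₂] [CompleteSpace G₂] (A : G₁ →L[ℝ] G₂) :
    MemS A ↔ IsBoundedlyInvertible A ∧ IsHilbertSchmidt (1 - adjoint A ∘L A) := by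
  refine and_congr_right fun _ => ⟨fun ⟨S, hS, hSS, h⟩ => ?_, fun h => ?_⟩
  · rw [← hSS]
    exact (isHilbertSchmidt_one_sub_mul_self_iff hS).2 h
  · obtain ⟨S, hS, hSS⟩ := (isPositive_adjoint_comp_self A).exists_isPositive_mul_self_eq
    rw [← hSS] at h
    exact ⟨S, hS, hSS, (isHilbertSchmidt_one_sub_mul_self_iff hS).1 h⟩

lemma one_sub_adjoint_comp_self_comp {G₁ : Type u} {G₂ : Type v} {G₃ : Type w}
    [NormedAddCommGroup G₁] [InnerProductSpace ℝ G₁] [CompleteSpace G₁]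
    [NormedAddCommGroup G₂] [InnerProductSpace ℝ G₂] [CompleteSpace G₂]
    [NormedAddCommGroup G₃] [InnerProductSpace ℝ G₃] [CompleteSpace G₃]
    (A : G₁ →L[ℝ] G₂) (B : G₂ →L[ℝ] G₃) :
    1 - adjoint (B ∘L A) ∘L (B ∘L A) =
      (1 - adjoint A ∘L A) + adjoint A ∘L (1 - adjoint B ∘L B) ∘L A := by
  ext x
  simp only [adjoint_comp, add_apply, sub_apply, comp_apply, one_apply_eq_self, map_sub]
  abel

theorem memS_comp {G₁ : Type u} {G₂ : Type v} {G₃ : Type w}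
    [NormedAddCommGroup G₁] [InnerProductSpace ℝ G₁] [CompleteSpace G₁]
    [NormedAddCommGroup G₂] [InnerProductSpace ℝ G₂] [CompleteSpace G₂]
    [NormedAddCommGroup G₃] [InnerProductSpace ℝ G₃] [CompleteSpace G₃]
    (A : G₁ →L[ℝ] G₂) (B : G₂ →L[ℝ] G₃) (hA : MemS A) (hB : MemS B) :
    MemS (B.comp A) := by
  rw [memS_iff] at hA hB ⊢
  refine ⟨hA.1.comp hB.1, ?_⟩
  rw [one_sub_adjoint_comp_self_comp]
  exact hA.2.add ((hB.2.comp_right A).comp_left _)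

end
end

section
/- Let G₁ and G₂ be real Hilbert spaces and A ∈ S(G₁,G₂). Then there exist an orthonormal basis (eᵢ)_{i∈I} of G₁ and positive real numbers (λᵢ)_{i∈I} such that (A*A)^{1/2} eᵢ = λᵢ eᵢ for every i, ∑ᵢ (λᵢ − 1)² < ∞, and the vectors fᵢ := λᵢ⁻¹ A eᵢ form an orthonormal basis of G₂. -/
/-!
`1 - S₀` (with `S₀` the square root of `A*A` given by `A ∈ S(G₁,G₂)`) is Hilbert–Schmidt, hence
compact, and self-adjoint, so the spectral theorem gives an orthonormal eigenbasis `(eᵢ)` with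
`S₀ eᵢ = λᵢ eᵢ`. Parseval's identity in a Hilbert–Schmidt basis and Bessel's inequality bound
`∑ ‖(1 - S₀) vᵢ‖²` over any orthonormal family `(vᵢ)` by the Hilbert–Schmidt sum, so
`∑ (λᵢ - 1)² < ∞`. Since `⟪A eᵢ, A eⱼ⟫ = ⟪S₀² eᵢ, eⱼ⟫ = λᵢ² δᵢⱼ` and `A` is
injective, `λᵢ > 0` and the `λᵢ⁻¹ A eᵢ` are orthonormal; they span a dense subspace as `A` is onto.
Finally any positive square root `S` of `A*A` has the same eigenvectors: `S² eᵢ = λᵢ² eᵢ` gives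
`(S + λᵢ)(S - λᵢ) eᵢ = 0`, and `S + λᵢ` is injective by positivity.
-/

open ContinuousLinearMap
open scoped InnerProductSpace

noncomputable section

universe u v w

section
variable {𝕜 : Type w} {E : Type u} {F : Type v} [RCLike 𝕜]
  [NormedAddCommGroup E] [InnerProductSpace 𝕜 E] [NormedAddCommGroup F] [InnerProductSpace 𝕜 F]
  {ι κ : Type*}

theorem HilbertBasis.hasSum_norm_inner_sq (b : HilbertBasis ι 𝕜 E) (x : E) :
    HasSum (fun i => ‖⟪b i, x⟫_𝕜‖ ^ 2) (‖x‖ ^ 2) := by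
  have h := (b.hasSum_inner_mul_inner x x).mapL (RCLike.reCLM : 𝕜 →L[ℝ] ℝ)
  have hterm : ∀ i, ⟪x, b i⟫_𝕜 * ⟪b i, x⟫_𝕜 = ((‖⟪b i, x⟫_𝕜‖ ^ 2 : ℝ) : 𝕜) := fun i => by
    rw [← inner_conj_symm, RCLike.conj_mul]; norm_cast
  simp only [hterm, RCLike.reCLM_apply, RCLike.ofReal_re] at h
  rwa [inner_self_eq_norm_sq] at h

theorem HilbertBasis.norm_apply_le_sqrt_tsum (b : HilbertBasis ι 𝕜 E) (T : E →L[𝕜] F)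
    (hT : Summable fun i => ‖T (b i)‖ ^ 2) (x : E) :
    ‖T x‖ ≤ √(∑' i, ‖T (b i)‖ ^ 2) * ‖x‖ := by
  have hx : HasSum (fun i => ⟪b i, x⟫_𝕜 • T (b i)) (T x) := by
    simpa [b.repr_apply_apply] using (b.hasSum_repr x).mapL T
  refine le_of_tendsto' hx.norm fun s => ?_
  calc ‖∑ i ∈ s, ⟪b i, x⟫_𝕜 • T (b i)‖ ≤ ∑ i ∈ s, ‖⟪b i, x⟫_𝕜‖ * ‖T (b i)‖ :=
        (norm_sum_le _ _).trans_eq (by simp only [norm_smul])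
    _ ≤ √(∑ i ∈ s, ‖⟪b i, x⟫_𝕜‖ ^ 2) * √(∑ i ∈ s, ‖T (b i)‖ ^ 2) :=
        Real.sum_mul_le_sqrt_mul_sqrt _ _ _
    _ ≤ √(‖x‖ ^ 2) * √(∑' i, ‖T (b i)‖ ^ 2) := by
        gcongr
        · exact b.orthonormal.sum_inner_products_le x
        · exact hT.sum_le_tsum s fun i _ => by positivity
    _ = √(∑' i, ‖T (b i)‖ ^ 2) * ‖x‖ := by rw [Real.sqrt_sq (norm_nonneg x), mul_comm]

theorem HilbertBasis.isCompactOperator_of_summable [CompleteSpace F] (b : HilbertBasis ι 𝕜 E)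
    (T : E →L[𝕜] F) (hT : Summable fun i => ‖T (b i)‖ ^ 2) : IsCompactOperator T := by
  classical
  let g : Finset ι → E →L[𝕜] F := fun s =>
    ∑ i ∈ s, (toSpanSingleton 𝕜 (T (b i))).comp (innerSL 𝕜 (b i))
  have hg_compact : ∀ s, IsCompactOperator (g s) := fun s =>
    (compactOperator (RingHom.id 𝕜) E F).sum_mem fun i _ =>
      (isCompactOperator_of_locallyCompactSpace_dom (innerSL 𝕜 (b i))).clm_comp
        (toSpanSingleton 𝕜 (T (b i)))
  have hg_basis : ∀ s j, (T - g s) (b j) = if j ∈ s then 0 else T (b j) := by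
    intro s j
    split_ifs with hj <;>
      simp [g, sum_apply, orthonormal_iff_ite.mp b.orthonormal, hj]
  have hg_norm : ∀ s, ‖T - g s‖ ≤ √(∑' j : {j // j ∉ s}, ‖T (b j)‖ ^ 2) := by
    intro s
    have hsq : (fun j => ‖(T - g s) (b j)‖ ^ 2) =
        ((↑s : Set ι)ᶜ).indicator fun j => ‖T (b j)‖ ^ 2 := by
      ext j; by_cases hj : j ∈ s <;> simp [hg_basis, hj]
    have := b.norm_apply_le_sqrt_tsum (T - g s) (by rw [hsq]; exact hT.indicator _)
    rw [hsq, ← tsum_subtype] at this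
    exact opNorm_le_bound _ (Real.sqrt_nonneg _) this
  refine isCompactOperator_of_tendsto (l := Filter.atTop) ?_
    (Filter.Eventually.of_forall hg_compact)
  rw [tendsto_iff_norm_sub_tendsto_zero]
  refine squeeze_zero (fun s => norm_nonneg _)
    (fun s => (norm_sub_rev _ _).trans_le (hg_norm s)) ?_
  simpa using (tendsto_tsum_compl_atTop_zero fun j => ‖T (b j)‖ ^ 2).sqrt

theorem Orthonormal.summable_norm_sq_apply [CompleteSpace E] [CompleteSpace F]
    (c : HilbertBasis κ 𝕜 F) (T : E →L[𝕜] F) (hT : Summable fun k => ‖adjoint T (c k)‖ ^ 2)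
    {v : ι → E} (hv : Orthonormal 𝕜 v) : Summable fun i => ‖T (v i)‖ ^ 2 := by
  have hparseval (i : ι) :
      HasSum (fun k => ‖⟪v i, adjoint T (c k)⟫_𝕜‖ ^ 2) (‖T (v i)‖ ^ 2) := by
    simpa only [adjoint_inner_right, norm_inner_symm (T (v i))] using
      c.hasSum_norm_inner_sq (T (v i))
  refine summable_of_sum_le (c := ∑' k, ‖adjoint T (c k)‖ ^ 2) (fun i => by positivity)
    fun s => ?_
  calc ∑ i ∈ s, ‖T (v i)‖ ^ 2 = ∑' k, ∑ i ∈ s, ‖⟪v i, adjoint T (c k)⟫_𝕜‖ ^ 2 := by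
        rw [Summable.tsum_finsetSum fun i _ => (hparseval i).summable]
        exact Finset.sum_congr rfl fun i _ => (hparseval i).tsum_eq.symm
    _ ≤ ∑' k, ‖adjoint T (c k)‖ ^ 2 :=
        Summable.tsum_le_tsum (fun k => hv.sum_inner_products_le _)
          (summable_sum fun i _ => (hparseval i).summable) hT

theorem DenseRange.dense_span_of_apply_mem_span {A : E →L[𝕜] F} (hA : DenseRange A) {v : ι → E}
    (hv : Dense (Submodule.span 𝕜 (Set.range v) : Set E)) {w : κ → F}
    (hvw : ∀ i, A (v i) ∈ Submodule.span 𝕜 (Set.range w)) :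
    Dense (Submodule.span 𝕜 (Set.range w) : Set F) := by
  refine (hA.dense_image A.continuous hv).mono ?_
  have hspan : Submodule.span 𝕜 (Set.range v) ≤
      (Submodule.span 𝕜 (Set.range w)).comap (A : E →ₗ[𝕜] F) :=
    Submodule.span_le.mpr (Set.range_subset_iff.mpr hvw)
  exact Set.image_subset_iff.mpr hspan

theorem ContinuousLinearMap.exists_hilbertBasis_eigenvectors [CompleteSpace E] {T : E →L[𝕜] E}
    (hT : IsCompactOperator T) (hT' : T.IsSymmetric) :
    ∃ (ι : Type (max w u)) (b : HilbertBasis ι 𝕜 E) (μ : ι → 𝕜), ∀ i, T (b i) = μ i • b i := by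
  choose s b hb using fun μ => exists_hilbertBasis 𝕜 (Module.End.eigenspace (T : E →ₗ[𝕜] E) μ)
  let v : (Σ μ, s μ) → E := fun a => b a.1 a.2
  have hv : Orthonormal 𝕜 v :=
    hT'.orthogonalFamily_eigenspaces.orthonormal_sigma_orthonormal fun μ => (b μ).orthonormal
  have heigen_le : ∀ μ, Module.End.eigenspace (T : E →ₗ[𝕜] E) μ ≤
      (Submodule.span 𝕜 (Set.range v)).topologicalClosure := by
    intro μ x hx
    let V := Module.End.eigenspace (T : E →ₗ[𝕜] E) μ
    have hspan : (Submodule.span 𝕜 (Set.range (b μ))).map (V.subtypeL : V →ₗ[𝕜] E) ≤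
        Submodule.span 𝕜 (Set.range v) := by
      rw [Submodule.map_span, Submodule.span_le]
      rintro _ ⟨_, ⟨i, rfl⟩, rfl⟩
      exact Submodule.subset_span ⟨⟨μ, i⟩, rfl⟩
    refine Submodule.topologicalClosure_mono hspan (Submodule.topologicalClosure_map _ _ ?_)
    exact ⟨⟨x, hx⟩, by simp [(b μ).dense_span], rfl⟩
  have hv_bot : (Submodule.span 𝕜 (Set.range v))ᗮ = ⊥ := by
    rw [← Submodule.orthogonal_closure, eq_bot_iff,
      ← ContinuousLinearMap.orthogonalComplement_iSup_eigenspaces_eq_bot hT hT']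
    exact Submodule.orthogonal_le (iSup_le heigen_le)
  refine ⟨_, HilbertBasis.mkOfOrthogonalEqBot hv hv_bot, fun a => a.1, fun a => ?_⟩
  rw [HilbertBasis.coe_mkOfOrthogonalEqBot]
  exact Module.End.mem_eigenspace_iff.mp (b a.1 a.2).2

theorem HilbertBasis.exists_eq_smul_apply_of_denseRange [CompleteSpace F] {A : E →L[𝕜] F}
    (hA : DenseRange A) (e : HilbertBasis ι 𝕜 E) {c : ι → 𝕜} (hc : ∀ i, c i ≠ 0)
    (hf : Orthonormal 𝕜 fun i => c i • A (e i)) :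
    ∃ f : HilbertBasis ι 𝕜 F, ∀ i, f i = c i • A (e i) := by
  have hAe : ∀ i, A (e i) ∈ Submodule.span 𝕜 (Set.range fun i => c i • A (e i)) := fun i => by
    have hmem : c i • A (e i) ∈ Submodule.span 𝕜 (Set.range fun i => c i • A (e i)) :=
      Submodule.subset_span (Set.mem_range_self i)
    simpa [smul_smul, inv_mul_cancel₀ (hc i)] using Submodule.smul_mem _ (c i)⁻¹ hmem
  have hdense := hA.dense_span_of_apply_mem_span
    (Submodule.dense_iff_topologicalClosure_eq_top.mpr e.dense_span) hAe
  refine ⟨HilbertBasis.mk hf (Submodule.dense_iff_topologicalClosure_eq_top.mp hdense).ge,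
    fun i => ?_⟩
  rw [HilbertBasis.coe_mk]

end

theorem IsHilbertSchmidt.exists_hilbertBasis_eigenvectors {E : Type u} [NormedAddCommGroup E]
    [InnerProductSpace ℝ E] [CompleteSpace E] {K : E →L[ℝ] E} (hK : IsHilbertSchmidt K)
    (hK' : IsSelfAdjoint K) :
    ∃ (ι : Type u) (e : HilbertBasis ι ℝ E) (μ : ι → ℝ),
      (∀ i, K (e i) = μ i • e i) ∧ Summable fun i => μ i ^ 2 := by
  obtain ⟨κ, c, hc⟩ := hK
  obtain ⟨ι, e, μ, hKe⟩ :=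
    ContinuousLinearMap.exists_hilbertBasis_eigenvectors (c.isCompactOperator_of_summable K hc)
      hK'.isSymmetric
  refine ⟨ι, e, μ, hKe, ?_⟩
  refine (e.orthonormal.summable_norm_sq_apply c K (by rwa [hK'.adjoint_eq])).congr fun i => ?_
  rw [hKe, norm_smul, e.orthonormal.1 i, mul_one, Real.norm_eq_abs, sq_abs]

theorem ContinuousLinearMap.IsPositive.apply_eq_smul_of_apply_apply_eq {E : Type*}
    [NormedAddCommGroup E] [InnerProductSpace ℝ E] {T : E →L[ℝ] E} (hT : T.IsPositive) {c : ℝ}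
    (hc : 0 < c) {x : E} (h : T (T x) = c ^ 2 • x) : T x = c • x := by
  set y := T x - c • x
  have hTy : T y = -c • y := by
    simp only [y, map_sub, map_smul, h]
    module
  have hy : 0 ≤ -c * ‖y‖ ^ 2 := by
    simpa [hTy, real_inner_smul_left, real_inner_self_eq_norm_sq] using hT.inner_nonneg_left y
  have hy0 : y = 0 := by
    by_contra hne
    nlinarith [mul_pos hc (pow_pos (norm_pos_iff.mpr hne) 2)]
  exact sub_eq_zero.mp hy0

section
variable {E F : Type*} [NormedAddCommGroup E] [InnerProductSpace ℝ E] [CompleteSpace E]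
  [NormedAddCommGroup F] [InnerProductSpace ℝ F] [CompleteSpace F]
  {A : E →L[ℝ] F} {S : E →L[ℝ] E}

theorem inner_apply_apply_eq_sq_mul_of_apply_eq_smul (hS : S.comp S = (adjoint A).comp A)
    {x : E} {a : ℝ} (hx : S x = a • x) (y : E) : ⟪A x, A y⟫_ℝ = a ^ 2 * ⟪x, y⟫_ℝ := by
  rw [← adjoint_inner_left, ← comp_apply, ← hS, comp_apply, hx, map_smul, hx, smul_smul,
    real_inner_smul_left, sq]

theorem ContinuousLinearMap.IsPositive.pos_of_apply_eq_smul (hS : S.IsPositive)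
    (hSA : S.comp S = (adjoint A).comp A) (hA : Function.Injective A) {x : E} (hx0 : x ≠ 0)
    {a : ℝ} (hx : S x = a • x) : 0 < a := by
  have hnonneg : 0 ≤ a * ‖x‖ ^ 2 := by
    simpa [hx, real_inner_smul_left, real_inner_self_eq_norm_sq] using hS.inner_nonneg_left x
  have hAx : A x ≠ 0 := fun h => hx0 (hA (h.trans (map_zero A).symm))
  refine (nonneg_of_mul_nonneg_left hnonneg (by positivity)).lt_of_ne fun h0 => hAx ?_
  simpa [← h0] using inner_apply_apply_eq_sq_mul_of_apply_eq_smul hSA hx x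

theorem Orthonormal.inv_smul_apply_of_apply_eq_smul (hS : S.comp S = (adjoint A).comp A)
    {ι : Type*} {e : ι → E} (he : Orthonormal ℝ e) {lam : ι → ℝ} (hlam : ∀ i, lam i ≠ 0)
    (hSe : ∀ i, S (e i) = lam i • e i) : Orthonormal ℝ fun i => (lam i)⁻¹ • A (e i) := by
  classical
  refine orthonormal_iff_ite.mpr fun i j => ?_
  rw [real_inner_smul_left, real_inner_smul_right,
    inner_apply_apply_eq_sq_mul_of_apply_eq_smul hS (hSe i), orthonormal_iff_ite.mp he]
  split_ifs with hij
  · subst hij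
    field_simp [hlam i]
  · simp

end

theorem exists_diagonalizing_bases {G₁ : Type u} {G₂ : Type v}
    [NormedAddCommGroup G₁] [InnerProductSpace ℝ G₁] [CompleteSpace G₁]
    [NormedAddCommGroup G₂] [InnerProductSpace ℝ G₂] [CompleteSpace G₂]
    (A : G₁ →L[ℝ] G₂) (hA : MemS A)
    (S : G₁ →L[ℝ] G₁) (hSpos : S.IsPositive)
    (hSsq : S.comp S = (ContinuousLinearMap.adjoint A).comp A) :
    ∃ (ι : Type u) (e : HilbertBasis ι ℝ G₁) (lam : ι → ℝ),
      (∀ i, 0 < lam i) ∧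
      (∀ i, S (e i) = lam i • e i) ∧
      Summable (fun i => (lam i - 1) ^ 2) ∧
      ∃ f : HilbertBasis ι ℝ G₂, ∀ i, f i = (lam i)⁻¹ • A (e i) := by
  obtain ⟨⟨B, hBA, hAB⟩, S₀, hS₀pos, hS₀sq, hHS⟩ := hA
  obtain ⟨ι, e, μ, hKe, hμ⟩ :=
    hHS.exists_hilbertBasis_eigenvectors ((IsSelfAdjoint.one _).sub hS₀pos.isSelfAdjoint)
  set lam := fun i => 1 - μ i
  have hS₀e : ∀ i, S₀ (e i) = lam i • e i := fun i => by
    rw [sub_smul, one_smul, ← hKe i]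
    simp
  have hA_inj : Function.Injective A := Function.LeftInverse.injective fun x => by
    simpa using congrArg (fun T => T x) hBA
  have hA_dense : DenseRange A := Function.Surjective.denseRange fun y =>
    ⟨B y, by simpa using congrArg (fun T => T y) hAB⟩
  have hlam : ∀ i, 0 < lam i := fun i =>
    hS₀pos.pos_of_apply_eq_smul hS₀sq hA_inj (e.orthonormal.ne_zero i) (hS₀e i)
  have hSe : ∀ i, S (e i) = lam i • e i := fun i =>
    hSpos.apply_eq_smul_of_apply_apply_eq (hlam i) <| by
      rw [← comp_apply, hSsq, ← hS₀sq, comp_apply, hS₀e, map_smul, hS₀e, smul_smul, sq]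
  exact ⟨ι, e, lam, hlam, hSe, hμ.congr fun i => by ring,
    e.exists_eq_smul_apply_of_denseRange hA_dense (fun i => inv_ne_zero (hlam i).ne')
      (e.orthonormal.inv_smul_apply_of_apply_eq_smul hS₀sq (fun i => (hlam i).ne') hS₀e)⟩

end
end

section
/- Let (Gₙ) be a sequence of closed subspaces of a real Hilbert space H. Then limsup Gₙ = (liminf Gₙ^⊥)^⊥; that is, the closed linear span of all weak subsequential limits of sequences xₙ ∈ Gₙ equals the orthogonal complement of the subspace {y ∈ H : y = lim yₙ in norm for some sequence yₙ with yₙ ∈ Gₙ^⊥}. -/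
/-! Weak limits of vectors `xₙ ∈ G_{kₙ}` are orthogonal to norm limits of vectors `yₙ ∈ Gₙᗮ`,
because `⟪xₙ, y_{kₙ}⟫ = 0` and weakly convergent sequences are bounded; this gives `⊆`.
Conversely, if `z ⊥ limsup Gₙ`, then the projections `Pₙ z` of `z` onto `Gₙ` tend to `0`:
otherwise a subsequence with `‖Pₙ z‖ ≥ ε` has, by weak sequential compactness, a weak limit
`w ∈ limsup Gₙ`, and `‖Pₙ z‖² = ⟪Pₙ z, z⟫ → ⟪w, z⟫ = 0`. Hence `z = lim (z - Pₙ z)` lies in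
`liminf Gₙᗮ`, so `(liminf Gₙᗮ)ᗮ ⊆ (limsup Gₙ)ᗮᗮ = limsup Gₙ`. -/

open Filter Topology
open scoped InnerProductSpace

/-- `liminf Gₙ`: the set of vectors that are norm limits of sequences `xₙ ∈ Gₙ`. -/
def liminfSet {H : Type*} [NormedAddCommGroup H] [InnerProductSpace ℝ H]
    (G : ℕ → Submodule ℝ H) : Set H :=
  {x | ∃ xs : ℕ → H, (∀ n, xs n ∈ G n) ∧ Tendsto xs atTop (nhds x)}

/-- Weak convergence of a sequence in an inner product space. -/
def WeakTendsto {H : Type*} [NormedAddCommGroup H] [InnerProductSpace ℝ H]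
    (xs : ℕ → H) (x : H) : Prop :=
  ∀ y : H, Tendsto (fun n => ⟪xs n, y⟫_ℝ) atTop (nhds ⟪x, y⟫_ℝ)

/-- The set of weak limits of weakly convergent subsequences `x_{kₙ} ∈ G_{kₙ}`. -/
def weakSubseqLimits {H : Type*} [NormedAddCommGroup H] [InnerProductSpace ℝ H]
    (G : ℕ → Submodule ℝ H) : Set H :=
  {x | ∃ k : ℕ → ℕ, StrictMono k ∧
    ∃ xs : ℕ → H, (∀ n, xs n ∈ G (k n)) ∧ WeakTendsto xs x}

/-- `limsup Gₙ`: the closed linear span of all weak subsequential limits. -/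
noncomputable def limsupSubmodule {H : Type*} [NormedAddCommGroup H]
    [InnerProductSpace ℝ H] (G : ℕ → Submodule ℝ H) : Submodule ℝ H :=
  (Submodule.span ℝ (weakSubseqLimits G)).topologicalClosure

section

variable {H : Type*} [NormedAddCommGroup H] [InnerProductSpace ℝ H]

namespace WeakTendsto

theorem exists_norm_le [CompleteSpace H] {xs : ℕ → H} {x : H} (h : WeakTendsto xs x) :
    ∃ C, ∀ n, ‖xs n‖ ≤ C := by
  have hpt : ∀ y : H, ∃ C, ∀ n, ‖innerSL ℝ (xs n) y‖ ≤ C := fun y =>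
    let ⟨C, hC⟩ := (h y).norm.bddAbove_range
    ⟨C, fun n => hC (Set.mem_range_self n)⟩
  obtain ⟨C, hC⟩ := banach_steinhaus hpt
  exact ⟨C, fun n => by simpa only [innerSL_apply_norm] using hC n⟩

theorem tendsto_inner [CompleteSpace H] {xs ys : ℕ → H} {x y : H} (hx : WeakTendsto xs x)
    (hy : Tendsto ys atTop (𝓝 y)) : Tendsto (fun n => ⟪xs n, ys n⟫_ℝ) atTop (𝓝 ⟪x, y⟫_ℝ) := by
  obtain ⟨C, hC⟩ := hx.exists_norm_le
  have herr : Tendsto (fun n => ⟪xs n, ys n - y⟫_ℝ) atTop (𝓝 0) := by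
    have hdist : Tendsto (fun n => C * ‖ys n - y‖) atTop (𝓝 0) := by
      simpa using (tendsto_iff_norm_sub_tendsto_zero.1 hy).const_mul C
    refine squeeze_zero_norm (fun n => ?_) hdist
    exact (norm_inner_le_norm _ _).trans (mul_le_mul_of_nonneg_right (hC n) (norm_nonneg _))
  simpa [inner_sub_right] using (hx y).add herr

theorem coe_submodule {K : Submodule ℝ H} [K.HasOrthogonalProjection] {xs : ℕ → K} {x : K}
    (h : WeakTendsto xs x) : WeakTendsto (fun n => (xs n : H)) x := fun y => by
  simpa only [Submodule.inner_orthogonalProjectionOnto_eq_of_mem_left] using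
    h (K.orthogonalProjectionOnto y)

end WeakTendsto

theorem exists_weakTendsto_subseq_of_separableSpace [CompleteSpace H]
    [TopologicalSpace.SeparableSpace H] {C : ℝ} {v : ℕ → H} (hv : ∀ n, ‖v n‖ ≤ C) :
    ∃ φ : ℕ → ℕ, StrictMono φ ∧ ∃ w, WeakTendsto (fun n => v (φ n)) w := by
  let f : ℕ → WeakDual ℝ H := fun n => StrongDual.toWeakDual (InnerProductSpace.toDual ℝ H (v n))
  have hf : ∀ n, f n ∈ WeakDual.toStrongDual ⁻¹' Metric.closedBall 0 C := fun n => by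
    simpa [f] using hv n
  obtain ⟨ℓ, -, φ, hφ, hlim⟩ := WeakDual.isSeqCompact_closedBall ℝ H 0 C hf
  refine ⟨φ, hφ, (InnerProductSpace.toDual ℝ H).symm (WeakDual.toStrongDual ℓ), fun y => ?_⟩
  rw [InnerProductSpace.toDual_symm_apply]
  exact ((WeakDual.eval_continuous y).tendsto ℓ).comp hlim

theorem exists_weakTendsto_subseq [CompleteSpace H] {C : ℝ} {v : ℕ → H} (hv : ∀ n, ‖v n‖ ≤ C) :
    ∃ φ : ℕ → ℕ, StrictMono φ ∧ ∃ w, WeakTendsto (fun n => v (φ n)) w := by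
  set S := Submodule.span ℝ (Set.range v)
  have : CompleteSpace S.topologicalClosure := S.isClosed_topologicalClosure.completeSpace_coe
  have : TopologicalSpace.SeparableSpace S.topologicalClosure := by
    have hS : TopologicalSpace.IsSeparable (S.topologicalClosure : Set H) := by
      rw [S.topologicalClosure_coe]
      exact (Set.countable_range v).isSeparable.span.closure
    exact hS.separableSpace
  let u : ℕ → S.topologicalClosure := fun n =>
    ⟨v n, S.le_topologicalClosure (Submodule.subset_span (Set.mem_range_self n))⟩
  obtain ⟨φ, hφ, w, hw⟩ := exists_weakTendsto_subseq_of_separableSpace (v := u) hv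
  exact ⟨φ, hφ, w, hw.coe_submodule⟩

theorem real_inner_starProjection_self (K : Submodule ℝ H) [K.HasOrthogonalProjection] (v : H) :
    ⟪K.starProjection v, v⟫_ℝ = ‖K.starProjection v‖ ^ 2 := by
  have h := K.starProjection_inner_eq_zero v _ (K.starProjection_apply_mem v)
  rw [inner_sub_left, real_inner_comm] at h
  linarith [real_inner_self_eq_norm_sq (K.starProjection v)]

section Limits

variable [CompleteSpace H] {G : ℕ → Submodule ℝ H}

theorem inner_eq_zero_of_mem_weakSubseqLimits_of_mem_liminfSet {w x : H}
    (hw : w ∈ weakSubseqLimits G) (hx : x ∈ liminfSet (fun n => (G n)ᗮ)) : ⟪w, x⟫_ℝ = 0 := by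
  obtain ⟨k, hk, xs, hxs, hxsw⟩ := hw
  obtain ⟨ys, hys, hysx⟩ := hx
  have hzero : ∀ n, ⟪xs n, ys (k n)⟫_ℝ = 0 := fun n =>
    (Submodule.mem_orthogonal _ _).1 (hys (k n)) _ (hxs n)
  exact tendsto_nhds_unique (hxsw.tendsto_inner (hysx.comp hk.tendsto_atTop))
    (by simp [hzero])

theorem limsupSubmodule_le_orthogonal_singleton {x : H}
    (hx : x ∈ liminfSet (fun n => (G n)ᗮ)) : limsupSubmodule G ≤ (ℝ ∙ x)ᗮ := by
  refine Submodule.topologicalClosure_minimal _ (Submodule.span_le.2 fun w hw => ?_)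
    (Submodule.isClosed_orthogonal _)
  rw [SetLike.mem_coe, Submodule.mem_orthogonal_singleton_iff_inner_right, real_inner_comm]
  exact inner_eq_zero_of_mem_weakSubseqLimits_of_mem_liminfSet hw hx

theorem tendsto_starProjection_of_mem_orthogonal_limsupSubmodule
    [∀ n, (G n).HasOrthogonalProjection] {z : H} (hz : z ∈ (limsupSubmodule G)ᗮ) :
    Tendsto (fun n => (G n).starProjection z) atTop (𝓝 0) := by
  by_contra hne
  obtain ⟨ε, hε, hfreq⟩ : ∃ ε > 0, ∃ᶠ n in atTop, ε ≤ ‖(G n).starProjection z‖ := by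
    simpa [Metric.tendsto_atTop, frequently_atTop] using hne
  obtain ⟨k, hk, hkε⟩ := extraction_of_frequently_atTop hfreq
  obtain ⟨φ, hφ, w, hw⟩ := exists_weakTendsto_subseq (C := ‖z‖)
    (v := fun n => (G (k n)).starProjection z) fun n => (G (k n)).norm_starProjection_apply_le z
  have hwK : w ∈ limsupSubmodule G :=
    Submodule.le_topologicalClosure _ <| Submodule.subset_span
      ⟨k ∘ φ, hk.comp hφ, _, fun n => (G (k (φ n))).starProjection_apply_mem z, hw⟩
  have hlim : Tendsto (fun n => ‖(G (k (φ n))).starProjection z‖ ^ 2) atTop (𝓝 0) := by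
    simpa only [real_inner_starProjection_self, (Submodule.mem_orthogonal _ _).1 hz w hwK]
      using hw z
  have : ε ^ 2 ≤ 0 := ge_of_tendsto hlim <| Eventually.of_forall fun n =>
    pow_le_pow_left₀ hε.le (hkε (φ n)) 2
  exact (pow_pos hε 2).not_ge this

theorem orthogonal_limsupSubmodule_subset_liminfSet [∀ n, (G n).HasOrthogonalProjection] :
    ((limsupSubmodule G)ᗮ : Set H) ⊆ liminfSet (fun n => (G n)ᗮ) := fun z hz =>
  ⟨fun n => z - (G n).starProjection z, fun n => (G n).sub_starProjection_mem_orthogonal z,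
    by simpa using
      tendsto_const_nhds.sub (tendsto_starProjection_of_mem_orthogonal_limsupSubmodule hz)⟩

end Limits

end

theorem limsup_eq_orthogonal_of_liminf_orthogonal {H : Type*} [NormedAddCommGroup H]
    [InnerProductSpace ℝ H] [CompleteSpace H] (G : ℕ → Submodule ℝ H)
    (hG : ∀ n, IsClosed ((G n : Set H))) :
    (limsupSubmodule G : Set H) =
      {y : H | ∀ x ∈ liminfSet (fun n => (G n)ᗮ), ⟪x, y⟫_ℝ = 0} := by
  have : ∀ n, CompleteSpace (G n) := fun n => (hG n).completeSpace_coe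
  have : CompleteSpace (limsupSubmodule G) :=
    (Submodule.isClosed_topologicalClosure _).completeSpace_coe
  ext y
  constructor
  · intro hy x hx
    exact Submodule.mem_orthogonal_singleton_iff_inner_right.1
      (limsupSubmodule_le_orthogonal_singleton hx hy)
  · intro hy
    rw [SetLike.mem_coe, ← Submodule.orthogonal_orthogonal (limsupSubmodule G)]
    exact fun z hz => hy z (orthogonal_limsupSubmodule_subset_liminfSet hz)
end

section
/- Let (Gₙ) be a sequence of closed subspaces of a real Hilbert space H such that liminf Gₙ = H, i.e. every x ∈ H is the norm limit of a sequence xₙ with xₙ ∈ Gₙ. Then limsup Gₙ^⊥ = {0}; in particular, whenever (y_{kₙ}) is a weakly convergent subsequence of a sequence (yₙ) with yₙ ∈ Gₙ^⊥, its weak limit is 0. -/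
open Filter
open scoped InnerProductSpace

section WeakTendsto

variable {H : Type*} [NormedAddCommGroup H] [InnerProductSpace ℝ H]

/-- Banach–Steinhaus, applied to the pointwise bounded functionals `⟪xs n, ·⟫`. -/
theorem WeakTendsto.exists_norm_le_s12 [CompleteSpace H] {xs : ℕ → H} {l : H}
    (h : WeakTendsto xs l) : ∃ C, ∀ n, ‖xs n‖ ≤ C := by
  have hpointwise : ∀ y : H, ∃ C, ∀ n, ‖innerSL ℝ (xs n) y‖ ≤ C := fun y => by
    obtain ⟨C, hC⟩ := (h y).norm.bddAbove_range
    exact ⟨C, fun n => hC ⟨n, rfl⟩⟩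
  obtain ⟨C, hC⟩ := banach_steinhaus hpointwise
  exact ⟨C, fun n => by simpa only [innerSL_apply_norm] using hC n⟩

theorem WeakTendsto.tendsto_inner_s12 [CompleteSpace H] {xs ys : ℕ → H} {l y : H}
    (hx : WeakTendsto xs l) (hy : Tendsto ys atTop (nhds y)) :
    Tendsto (fun n => ⟪xs n, ys n⟫_ℝ) atTop (nhds ⟪l, y⟫_ℝ) := by
  obtain ⟨C, hC⟩ := hx.exists_norm_le_s12
  have hsmall : Tendsto (fun n => ⟪xs n, ys n - y⟫_ℝ) atTop (nhds 0) := by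
    have hC_dist : Tendsto (fun n => C * ‖ys n - y‖) atTop (nhds 0) := by
      simpa using (tendsto_iff_norm_sub_tendsto_zero.mp hy).const_mul C
    refine squeeze_zero_norm (fun n => ?_) hC_dist
    calc ‖⟪xs n, ys n - y⟫_ℝ‖ ≤ ‖xs n‖ * ‖ys n - y‖ := norm_inner_le_norm _ _
      _ ≤ C * ‖ys n - y‖ := mul_le_mul_of_nonneg_right (hC n) (norm_nonneg _)
  simpa [inner_sub_right] using (hx y).add hsmall

/-- Pairing `xs n` with norm approximations of `l` from `G (k n)` gives `‖l‖² = 0`. -/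
theorem weakLimit_orthogonal_eq_zero_of_liminfSet_eq_univ [CompleteSpace H]
    {G : ℕ → Submodule ℝ H} (hliminf : liminfSet G = Set.univ) {k : ℕ → ℕ}
    (hk : Tendsto k atTop atTop) {xs : ℕ → H} (hxs : ∀ n, xs n ∈ (G (k n))ᗮ) {l : H}
    (hl : WeakTendsto xs l) : l = 0 := by
  obtain ⟨zs, hzs, hzl⟩ : l ∈ liminfSet G := hliminf ▸ Set.mem_univ l
  have hzero : Tendsto (fun n => ⟪xs n, zs (k n)⟫_ℝ) atTop (nhds 0) := by
    simp only [Submodule.inner_left_of_mem_orthogonal (hzs _) (hxs _), tendsto_const_nhds]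
  have hll : ⟪l, l⟫_ℝ = 0 := tendsto_nhds_unique (hl.tendsto_inner_s12 (hzl.comp hk)) hzero
  rwa [inner_self_eq_zero] at hll

theorem limsupSubmodule_eq_bot_of_weakSubseqLimits_subset {G : ℕ → Submodule ℝ H}
    (h : weakSubseqLimits G ⊆ {0}) : limsupSubmodule G = ⊥ := by
  rw [limsupSubmodule, Submodule.span_eq_bot.mpr h]
  exact isClosed_singleton.submodule_topologicalClosure_eq

end WeakTendsto

theorem limsup_orthogonal_eq_bot_of_liminf_univ_general {H : Type*} [NormedAddCommGroup H]
    [InnerProductSpace ℝ H] [CompleteSpace H] (G : ℕ → Submodule ℝ H)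
    (hliminf : liminfSet G = Set.univ) :
    limsupSubmodule (fun n => (G n)ᗮ) = ⊥ ∧
      ∀ ys : ℕ → H, (∀ n, ys n ∈ (G n)ᗮ) →
        ∀ k : ℕ → ℕ, StrictMono k →
          ∀ l : H, WeakTendsto (fun n => ys (k n)) l → l = 0 := by
  refine ⟨limsupSubmodule_eq_bot_of_weakSubseqLimits_subset ?_, ?_⟩
  · rintro l ⟨k, hk, xs, hxs, hl⟩
    exact weakLimit_orthogonal_eq_zero_of_liminfSet_eq_univ hliminf hk.tendsto_atTop hxs hl
  · intro ys hys k hk l hl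
    exact weakLimit_orthogonal_eq_zero_of_liminfSet_eq_univ hliminf hk.tendsto_atTop
      (fun n => hys (k n)) hl

theorem limsup_orthogonal_eq_bot_of_liminf_univ {H : Type*} [NormedAddCommGroup H]
    [InnerProductSpace ℝ H] [CompleteSpace H] (G : ℕ → Submodule ℝ H)
    (hG : ∀ n, IsClosed ((G n : Set H)))
    (hliminf : liminfSet G = Set.univ) :
    limsupSubmodule (fun n => (G n)ᗮ) = ⊥ ∧
      ∀ ys : ℕ → H, (∀ n, ys n ∈ (G n)ᗮ) →
        ∀ k : ℕ → ℕ, StrictMono k →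
          ∀ l : H, WeakTendsto (fun n => ys (k n)) l → l = 0 :=
  limsup_orthogonal_eq_bot_of_liminf_univ_general G hliminf
end
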